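/- Let S be a factorial set of words over an alphabet A with k+1 = Card(S ∩ A). If S is neutral, then its complexity satisfies Card(S ∩ A^n) = kn + 1 for all n ≥ 0. -/

import Mathlib

namespace Paper

variable {A : Type*}

/-- A set of words is factorial if it contains all factors of its elements. -/
def Factorial (S : Set (List A)) : Prop := ∀ w ∈ S, ∀ u : List A, u <:+: w → u ∈ S

def Lext (S : Set (List A)) (w : List A) : Set A := {a | a :: w ∈ S}
def Rext (S : Set (List A)) (w : List A) : Set A := {a | w ++ [a] ∈ S}
def Eext (S : Set (List A)) (w : List A) : Set (A × A) := {p | p.1 :: (w ++ [p.2]) ∈ S}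

def ExtVertex (S : Set (List A)) (w : List A) :=
  {v : A ⊕ A // Sum.elim (fun a => a ∈ Lext S w) (fun b => b ∈ Rext S w) v}

/-- The extension graph of `w` in `S`. -/
def extGraph (S : Set (List A)) (w : List A) : SimpleGraph (ExtVertex S w) where
  Adj u v := (∃ a b, u.1 = Sum.inl a ∧ v.1 = Sum.inr b ∧ (a, b) ∈ Eext S w) ∨
             (∃ a b, u.1 = Sum.inr b ∧ v.1 = Sum.inl a ∧ (a, b) ∈ Eext S w)
  symm := by
    refine ⟨?_⟩
    rintro u v (⟨a, b, h1, h2, h3⟩ | ⟨a, b, h1, h2, h3⟩)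
    · exact Or.inr ⟨a, b, h2, h1, h3⟩
    · exact Or.inl ⟨a, b, h2, h1, h3⟩
  loopless := by
    refine ⟨?_⟩
    rintro u (⟨a, b, h1, h2, _⟩ | ⟨a, b, h1, h2, _⟩) <;> rw [h1] at h2 <;> simp at h2

def IsPrefixCode (X : Set (List A)) : Prop :=
  (∀ x ∈ X, x ≠ []) ∧ ∀ x ∈ X, ∀ y ∈ X, x <+: y → x = y

def IsSuffixCode (X : Set (List A)) : Prop :=
  (∀ x ∈ X, x ≠ []) ∧ ∀ x ∈ X, ∀ y ∈ X, x <:+ y → x = y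

def IsBifixCode (X : Set (List A)) : Prop := IsPrefixCode X ∧ IsSuffixCode X

/-- The submonoid `X*` generated by a set of words. -/
def starOf (X : Set (List A)) : Set (List A) :=
  {m | ∃ ls : List (List A), (∀ u ∈ ls, u ∈ X) ∧ m = ls.flatten}

/-- A parse of `w` with respect to `X` : `w = v ++ x ++ u`, `v` has no suffix in `X`,
`x ∈ X*`, `u` has no prefix in `X`. -/
def IsParse (X : Set (List A)) (w : List A) (p : List A × List A × List A) : Prop :=
  w = p.1 ++ p.2.1 ++ p.2.2 ∧ (∀ s, s <:+ p.1 → s ∉ X) ∧ p.2.1 ∈ starOf X ∧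
    (∀ t, t <+: p.2.2 → t ∉ X)

noncomputable def parseCount (X : Set (List A)) (w : List A) : ℕ :=
  {p : List A × List A × List A | IsParse X w p}.ncard

/-- `X` has `S`-degree `d`. -/
def SDegreeIs (S X : Set (List A)) (d : ℕ) : Prop :=
  (∀ w ∈ S, parseCount X w ≤ d) ∧ ∃ w ∈ S, parseCount X w = d

def IsSMaximalBifixCode (S X : Set (List A)) : Prop :=
  IsBifixCode X ∧ X ⊆ S ∧ ∀ Y : Set (List A), IsBifixCode Y → Y ⊆ S → X ⊆ Y → Y = X

def Recurrent (S : Set (List A)) : Prop :=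
  Factorial S ∧ S ≠ {[]} ∧ S.Nonempty ∧ ∀ u ∈ S, ∀ w ∈ S, ∃ v, u ++ v ++ w ∈ S

def UniformlyRecurrent (S : Set (List A)) : Prop :=
  Factorial S ∧ (∀ w ∈ S, ∃ a : A, w ++ [a] ∈ S) ∧
    ∀ u ∈ S, ∃ n : ℕ, ∀ w ∈ S, w.length = n → u <:+: w

/-- The element of the free group corresponding to a word. -/
def toFG (w : List A) : FreeGroup A := (w.map FreeGroup.of).prod

/-- `T` is a basis of the subgroup `H` of the free group on `A`. -/
def IsBasisOf (T : Set (FreeGroup A)) (H : Subgroup (FreeGroup A)) : Prop :=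
  Function.Injective (FreeGroup.lift (Subtype.val : T → FreeGroup A)) ∧
  (FreeGroup.lift (Subtype.val : T → FreeGroup A)).range = H

/-!
Let `p n` be the number of words of length `n` in `S`. Every word of length `n + 1` of `S` arises
in exactly one way from a word `w` of length `n` by a right extension, and also by a left
extension; every word of length `n + 2` arises in exactly one way from such a `w` by a two-sided
extension. Hence `p (n + 1) = ∑ r(w) = ∑ ℓ(w)` and `p (n + 2) = ∑ e(w)`, the sums running over the
words of length `n`, and neutrality gives `p (n + 2) + p n = 2 p (n + 1)`. So `p` is an arithmetic
progression with `p 0 = 1` and `p 1 = k + 1`.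
-/

theorem ncard_biUnion_image_of_injective2 {ι β γ : Type*} {t : Set ι} (ht : t.Finite)
    {s : ι → Set β} (hs : ∀ i ∈ t, (s i).Finite) {f : ι → β → γ}
    (hf : Function.Injective2 f) :
    (⋃ i ∈ t, f i '' s i).ncard = ∑ᶠ i ∈ t, (s i).ncard := by
  have hdisj : t.PairwiseDisjoint fun i => f i '' s i := by
    intro i _ j _ hij
    simp only [Function.onFun, Set.disjoint_left]
    rintro _ ⟨b, _, rfl⟩ ⟨b', _, h⟩
    exact hij (hf h).1.symm
  rw [ht.ncard_biUnion (fun i hi => (hs i hi).image _) hdisj]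
  exact finsum_mem_congr rfl fun i _ => Set.ncard_image_of_injective _ (hf.right i)

section Complexity

variable (S : Set (List A))

def wordsOfLength (n : ℕ) : Set (List A) := {w ∈ S | w.length = n}

theorem finite_wordsOfLength [Finite A] (n : ℕ) : (wordsOfLength S n).Finite :=
  (List.finite_length_eq A n).subset fun _ hw => hw.2

variable {S}

theorem wordsOfLength_zero (hS : [] ∈ S) : wordsOfLength S 0 = {[]} := by
  ext w
  simp only [wordsOfLength, Set.mem_ofPred_eq, Set.mem_singleton_iff, List.length_eq_zero_iff]
  exact ⟨And.right, fun h => ⟨h ▸ hS, h⟩⟩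

theorem wordsOfLength_succ_eq_biUnion_rext (hS : Factorial S) (n : ℕ) :
    wordsOfLength S (n + 1) = ⋃ w ∈ wordsOfLength S n, (fun a => w ++ [a]) '' Rext S w := by
  ext u
  simp only [wordsOfLength, Rext, Set.mem_iUnion, Set.mem_image, Set.mem_ofPred_eq, exists_prop]
  constructor
  · rintro ⟨hu, hlen⟩
    obtain ⟨w, a, rfl⟩ : ∃ w a, u = w ++ [a] := by
      rcases List.eq_nil_or_concat u with rfl | h
      · simp at hlen
      · simpa using h
    exact ⟨w, ⟨hS _ hu w (List.prefix_append w [a]).isInfix, by simpa using hlen⟩, a, hu, rfl⟩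
  · rintro ⟨w, ⟨-, hw⟩, a, ha, rfl⟩
    exact ⟨ha, by simp [hw]⟩

theorem wordsOfLength_succ_eq_biUnion_lext (hS : Factorial S) (n : ℕ) :
    wordsOfLength S (n + 1) = ⋃ w ∈ wordsOfLength S n, (· :: w) '' Lext S w := by
  ext u
  simp only [wordsOfLength, Lext, Set.mem_iUnion, Set.mem_image, Set.mem_ofPred_eq, exists_prop]
  constructor
  · rintro ⟨hu, hlen⟩
    obtain _ | ⟨a, w⟩ := u
    · simp at hlen
    · exact ⟨w, ⟨hS _ hu w (List.suffix_cons a w).isInfix, by simpa using hlen⟩, a, hu, rfl⟩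
  · rintro ⟨w, ⟨-, hw⟩, a, ha, rfl⟩
    exact ⟨ha, by simp [hw]⟩

theorem wordsOfLength_add_two_eq_biUnion_eext (hS : Factorial S) (n : ℕ) :
    wordsOfLength S (n + 2) =
      ⋃ w ∈ wordsOfLength S n, (fun p : A × A => p.1 :: (w ++ [p.2])) '' Eext S w := by
  ext u
  simp only [wordsOfLength, Eext, Set.mem_iUnion, Set.mem_image, Set.mem_ofPred_eq, exists_prop,
    Prod.exists]
  constructor
  · rintro ⟨hu, hlen⟩
    obtain _ | ⟨a, v⟩ := u
    · simp at hlen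
    obtain ⟨w, b, rfl⟩ : ∃ w b, v = w ++ [b] := by
      rcases List.eq_nil_or_concat v with rfl | h
      · simp at hlen
      · simpa using h
    refine ⟨w, ⟨hS _ hu w ⟨[a], [b], rfl⟩, by simpa using hlen⟩, a, b, hu, rfl⟩
  · rintro ⟨w, ⟨-, hw⟩, a, b, hab, rfl⟩
    exact ⟨hab, by simp [hw]⟩

variable [Finite A]

theorem ncard_wordsOfLength_succ_eq_finsum_rext (hS : Factorial S) (n : ℕ) :
    (wordsOfLength S (n + 1)).ncard = ∑ᶠ w ∈ wordsOfLength S n, (Rext S w).ncard := by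
  rw [wordsOfLength_succ_eq_biUnion_rext hS]
  refine ncard_biUnion_image_of_injective2 (finite_wordsOfLength S n)
    (fun _ _ => Set.toFinite _) fun w w' a a' h => ?_
  simpa using List.append_inj' h rfl

theorem ncard_wordsOfLength_succ_eq_finsum_lext (hS : Factorial S) (n : ℕ) :
    (wordsOfLength S (n + 1)).ncard = ∑ᶠ w ∈ wordsOfLength S n, (Lext S w).ncard := by
  rw [wordsOfLength_succ_eq_biUnion_lext hS]
  refine ncard_biUnion_image_of_injective2 (finite_wordsOfLength S n)
    (fun _ _ => Set.toFinite _) fun w w' a a' h => ?_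
  simpa [and_comm] using h

theorem ncard_wordsOfLength_add_two_eq_finsum_eext (hS : Factorial S) (n : ℕ) :
    (wordsOfLength S (n + 2)).ncard = ∑ᶠ w ∈ wordsOfLength S n, (Eext S w).ncard := by
  rw [wordsOfLength_add_two_eq_biUnion_eext hS]
  refine ncard_biUnion_image_of_injective2 (finite_wordsOfLength S n)
    (fun _ _ => Set.toFinite _) fun w w' p p' h => ?_
  simp only [List.cons.injEq] at h
  obtain ⟨hw, hb⟩ := List.append_inj' h.2 rfl
  exact ⟨hw, Prod.ext h.1 (by simpa using hb)⟩

theorem ncard_wordsOfLength_add_two_add (hS : Factorial S)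
    (hneutral : ∀ w ∈ S, (Eext S w).ncard + 1 = (Lext S w).ncard + (Rext S w).ncard)
    (n : ℕ) :
    (wordsOfLength S (n + 2)).ncard + (wordsOfLength S n).ncard =
      2 * (wordsOfLength S (n + 1)).ncard := by
  have hfin := finite_wordsOfLength S n
  calc (wordsOfLength S (n + 2)).ncard + (wordsOfLength S n).ncard
      = ∑ᶠ w ∈ wordsOfLength S n, ((Eext S w).ncard + 1) := by
        rw [finsum_mem_add_distrib hfin, finsum_one,
          ncard_wordsOfLength_add_two_eq_finsum_eext hS]
    _ = ∑ᶠ w ∈ wordsOfLength S n, ((Lext S w).ncard + (Rext S w).ncard) :=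
        finsum_mem_congr rfl fun w hw => hneutral w hw.1
    _ = 2 * (wordsOfLength S (n + 1)).ncard := by
        rw [finsum_mem_add_distrib hfin, ← ncard_wordsOfLength_succ_eq_finsum_lext hS,
          ← ncard_wordsOfLength_succ_eq_finsum_rext hS, two_mul]

end Complexity

theorem eq_mul_add_of_add_two_add_eq {u : ℕ → ℕ} {a b : ℕ} (h0 : u 0 = b) (h1 : u 1 = a + b)
    (h : ∀ n, u (n + 2) + u n = 2 * u (n + 1)) (n : ℕ) : u n = a * n + b := by
  induction n using Nat.twoStepInduction with
  | zero => simpa using h0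
  | one => simpa using h1
  | more n ih ih' =>
    have := h n
    rw [ih, ih'] at this
    linarith

/-- A neutral factorial set over `k + 1` letters has complexity
`p n = k * n + 1`. -/
theorem neutral_complexity {A : Type*} [Fintype A] (S : Set (List A)) (k : ℕ)
    (hfac : Factorial S) (hk : {a : A | [a] ∈ S}.ncard = k + 1)
    (hneutral : ∀ w ∈ S,
      ((Eext S w).ncard : ℤ) = (Lext S w).ncard + (Rext S w).ncard - 1) :
    ∀ n : ℕ, {w ∈ S | w.length = n}.ncard = k * n + 1 := by
  obtain ⟨a, ha⟩ : {a : A | [a] ∈ S}.Nonempty := Set.nonempty_of_ncard_ne_zero (by omega)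
  have hzero := wordsOfLength_zero (hfac [a] ha [] List.nil_infix)
  have h0 : (wordsOfLength S 0).ncard = 1 := by rw [hzero, Set.ncard_singleton]
  have h1 : (wordsOfLength S 1).ncard = k + 1 := by
    rw [ncard_wordsOfLength_succ_eq_finsum_rext hfac, hzero, finsum_mem_singleton]
    exact hk
  exact eq_mul_add_of_add_two_add_eq h0 h1 <|
    ncard_wordsOfLength_add_two_add hfac fun w hw => by have := hneutral w hw; omega

end Paper
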